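/- Let L = p^{-1}Z_p ⊕ Z_p ⊕ Z_p ⊕ Z_p with the standard symplectic pairing, and let I be a totally isotropic direct summand of rank 2 of L. Then there exist a primitive element x ∈ I of type (I) and a primitive element y ∈ I of type (II), and any such pair x, y forms a Z_p-basis of I. -/

import Mathlib

/-- The paramodular lattice `L = p⁻¹ℤ_p ⊕ ℤ_p ⊕ ℤ_p ⊕ ℤ_p ⊆ ℚ_p⁴` is identified with `ℤ_p⁴`
via `(a,b,c,d) ↦ (p⁻¹a, b, c, d)`.  Under this identification the standard symplectic pairing
`⟨x,y⟩ = x₁y₄ + x₂y₃ − x₃y₂ − x₄y₁` becomes the following `ℚ_p`-valued pairing on `ℤ_p⁴`. -/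
noncomputable def spPara (p : ℕ) [Fact p.Prime] (u v : Fin 4 → ℤ_[p]) : ℚ_[p] :=
  ((u 0 * v 3 : ℤ_[p]) : ℚ_[p]) / (p : ℚ_[p]) + ((u 1 * v 2 : ℤ_[p]) : ℚ_[p])
    - ((u 2 * v 1 : ℤ_[p]) : ℚ_[p]) - ((u 3 * v 0 : ℤ_[p]) : ℚ_[p]) / (p : ℚ_[p])

/-- `x ∈ L` is primitive if `x ∉ pL`. -/
def ParaPrimitive (p : ℕ) [Fact p.Prime] (x : Fin 4 → ℤ_[p]) : Prop :=
  ¬ ∀ i, (p : ℤ_[p]) ∣ x i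

/-- A primitive element of type (I): `⟨x,y⟩ ∈ p⁻¹ℤ_p ∖ ℤ_p` for some `y ∈ L`. -/
def PrimTypeI (p : ℕ) [Fact p.Prime] (x : Fin 4 → ℤ_[p]) : Prop :=
  ParaPrimitive p x ∧ ∃ y : Fin 4 → ℤ_[p], ¬ ‖spPara p x y‖ ≤ 1

/-- A primitive element of type (II): `⟨x,y⟩ ∈ ℤ_p` for every `y ∈ L`. -/
def PrimTypeII (p : ℕ) [Fact p.Prime] (x : Fin 4 → ℤ_[p]) : Prop :=
  ParaPrimitive p x ∧ ∀ y : Fin 4 → ℤ_[p], ‖spPara p x y‖ ≤ 1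


/-!
Let `u, v` be a basis of `I` and `plucker u v i j = u i * v j - u j * v i` its `2 × 2` minors.
Primitive elements of type (II) are those whose coordinates `0` and `3` are divisible by `p`, and
isotropy of `I` reads `plucker u v 0 3 = p * plucker u v 2 1`. Since `I` is a direct summand,
`I ∩ pL = pI`, so the minors of `u, v` do not all vanish modulo `p`. If no element of `I` were of
type (I), the coordinates `0, 3` of `u` and `v` would vanish mod `p` and then, by isotropy, so
would every minor; hence `u` or `v` is of type (I). An element of type (II) is either `u` or
`u k • v - v k • u` for `k ∈ {0, 3}` with `p ∤ u k`. Finally, if `x` is of type (I) and `y` of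
type (II), the determinant of their coordinates in the basis `u, v` is prime to `p`: otherwise
`x` would, modulo `p`, be proportional to `y` and inherit its type. A unit determinant makes
`x, y` a basis.
-/

open Module

section Saturation

variable {R ι : Type*} [CommRing R] {I J : Submodule R (ι → R)}

theorem Submodule.dvd_repr_of_forall_dvd {κ : Type*} (hIJ : IsCompl I J) (b : Basis κ R I)
    {r : R} {w : I} (hw : ∀ i, r ∣ (w : ι → R) i) (k : κ) : r ∣ b.repr w k := by
  choose z hz using hw
  have hw : w = r • I.projectionOnto J hIJ z := by
    rw [← map_smul, ← Submodule.projectionOnto_apply_left hIJ w]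
    congr
    funext i
    exact hz i
  rw [hw, map_smul, Finsupp.smul_apply, smul_eq_mul]
  exact dvd_mul_right _ _

theorem Submodule.dvd_of_forall_dvd_smul_add_smul (hIJ : IsCompl I J) (b : Basis (Fin 2) R I)
    {r a c : R} (h : ∀ i, r ∣ (a • (b 0 : ι → R) + c • (b 1 : ι → R)) i) : r ∣ a ∧ r ∣ c := by
  have hrepr := Submodule.dvd_repr_of_forall_dvd hIJ b (w := a • b 0 + c • b 1) (by simpa using h)
  exact ⟨by simpa using hrepr 0, by simpa using hrepr 1⟩

theorem Submodule.not_forall_dvd_basis {κ : Type*} (hIJ : IsCompl I J) (b : Basis κ R I)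
    {r : R} (hr : ¬ IsUnit r) (k : κ) : ¬ ∀ i, r ∣ (b k : ι → R) i := fun h =>
  hr (isUnit_of_dvd_one (by simpa using Submodule.dvd_repr_of_forall_dvd hIJ b h k))

def plucker (u v : ι → R) (i j : ι) : R := u i * v j - u j * v i

theorem plucker_self (u v : ι → R) (i : ι) : plucker u v i i = 0 := sub_self _

theorem plucker_swap (u v : ι → R) (i j : ι) : plucker u v j i = -plucker u v i j := by
  unfold plucker; ring

theorem dvd_plucker_of_dvd {r : R} {u v : ι → R} {i : ι} (hu : r ∣ u i) (hv : r ∣ v i) (j : ι) :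
    r ∣ plucker u v i j :=
  dvd_sub (hu.mul_right _) (hv.mul_left _)

theorem Submodule.exists_not_dvd_plucker (hIJ : IsCompl I J) (b : Basis (Fin 2) R I) {r : R}
    (hr : ¬ IsUnit r) : ∃ i j, ¬ r ∣ plucker (b 0 : ι → R) (b 1) i j := by
  set u : ι → R := (b 0 : ι → R)
  set v : ι → R := (b 1 : ι → R)
  by_contra! hall
  obtain ⟨j, hj⟩ := not_forall.mp (Submodule.not_forall_dvd_basis hIJ b hr 0)
  have hcomb : ∀ i, r ∣ (v j • u + (-u j) • v) i := fun i => by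
    convert hall i j using 1
    simp only [plucker, Pi.add_apply, Pi.smul_apply, smul_eq_mul]
    ring
  exact hj (dvd_neg.mp (Submodule.dvd_of_forall_dvd_smul_add_smul hIJ b hcomb).2)

end Saturation

theorem Module.Basis.exists_smul_sub_smul_eq_det_smul {R M : Type*} [CommRing R] [AddCommGroup M]
    [Module R M] (b : Basis (Fin 2) R M) (x y : M) (k : Fin 2) :
    ∃ z, b.repr y k • x - b.repr x k • y = b.det ![x, y] • z := by
  rw [b.det_apply, Matrix.det_fin_two]
  simp only [b.toMatrix_apply, Matrix.cons_val_zero, Matrix.cons_val_one]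
  have hx := b.sum_repr x
  have hy := b.sum_repr y
  rw [Fin.sum_univ_two] at hx hy
  generalize b.repr x = α at hx ⊢
  generalize b.repr y = β at hy ⊢
  subst hx hy
  fin_cases k <;> simp only [Fin.zero_eta, Fin.mk_one]
  · exact ⟨-b 1, by module⟩
  · exact ⟨b 0, by module⟩

section Paramodular

variable {p : ℕ} [Fact p.Prime]

theorem PadicInt.norm_coe_div_p_le_one_iff (c : ℤ_[p]) :
    ‖(c : ℚ_[p]) / p‖ ≤ 1 ↔ (p : ℤ_[p]) ∣ c := by
  have hp : (0 : ℝ) < p := by exact_mod_cast (Fact.out : p.Prime).pos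
  rw [norm_div, Padic.norm_p, PadicInt.padic_norm_e_of_padicInt, div_le_one (by positivity),
    show (p : ℝ)⁻¹ = (p : ℝ) ^ (-(1 : ℕ) : ℤ) by simp,
    PadicInt.norm_le_pow_iff_mem_span_pow, pow_one, Ideal.mem_span_singleton]

theorem PadicInt.isUnit_of_not_dvd {z : ℤ_[p]} (h : ¬ (p : ℤ_[p]) ∣ z) : IsUnit z :=
  not_not.mp fun hz => h ((PadicInt.norm_lt_one_iff_dvd z).mp (PadicInt.not_isUnit_iff.mp hz))

theorem spPara_eq (u v : Fin 4 → ℤ_[p]) :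
    spPara p u v =
      ((plucker u v 0 3 : ℤ_[p]) : ℚ_[p]) / p + ((plucker u v 1 2 : ℤ_[p]) : ℚ_[p]) := by
  unfold spPara plucker
  push_cast
  ring

theorem norm_spPara_le_one_iff (u v : Fin 4 → ℤ_[p]) :
    ‖spPara p u v‖ ≤ 1 ↔ (p : ℤ_[p]) ∣ plucker u v 0 3 := by
  rw [spPara_eq, ← PadicInt.norm_coe_div_p_le_one_iff]
  set a : ℚ_[p] := ((plucker u v 0 3 : ℤ_[p]) : ℚ_[p]) / p
  set d : ℚ_[p] := ((plucker u v 1 2 : ℤ_[p]) : ℚ_[p])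
  have hd : ‖d‖ ≤ 1 := by
    rw [PadicInt.padic_norm_e_of_padicInt]
    exact PadicInt.norm_le_one _
  constructor
  · intro h
    simpa using (Padic.nonarchimedean (a + d) (-d)).trans (max_le h (by rwa [norm_neg]))
  · intro h
    exact (Padic.nonarchimedean a d).trans (max_le h hd)

theorem plucker_eq_of_spPara_eq_zero {u v : Fin 4 → ℤ_[p]} (h : spPara p u v = 0) :
    plucker u v 0 3 = p * plucker u v 2 1 := by
  have hp : (p : ℚ_[p]) ≠ 0 := by exact_mod_cast (Fact.out : p.Prime).ne_zero
  rw [spPara_eq] at h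
  field_simp at h
  apply Subtype.coe_injective
  push_cast [plucker] at h ⊢
  linear_combination h

theorem forall_norm_spPara_le_one_iff (x : Fin 4 → ℤ_[p]) :
    (∀ y, ‖spPara p x y‖ ≤ 1) ↔ (p : ℤ_[p]) ∣ x 0 ∧ (p : ℤ_[p]) ∣ x 3 := by
  simp only [norm_spPara_le_one_iff]
  constructor
  · intro h
    exact ⟨by simpa [plucker] using h ![0, 0, 0, 1], by simpa [plucker] using h ![1, 0, 0, 0]⟩
  · rintro ⟨h0, h3⟩ y
    exact dvd_sub (h0.mul_right _) (h3.mul_right _)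

theorem primTypeI_iff (x : Fin 4 → ℤ_[p]) :
    PrimTypeI p x ↔ ParaPrimitive p x ∧ ¬ ((p : ℤ_[p]) ∣ x 0 ∧ (p : ℤ_[p]) ∣ x 3) := by
  rw [PrimTypeI, ← forall_norm_spPara_le_one_iff, not_forall]

theorem primTypeII_iff (x : Fin 4 → ℤ_[p]) :
    PrimTypeII p x ↔ ParaPrimitive p x ∧ (p : ℤ_[p]) ∣ x 0 ∧ (p : ℤ_[p]) ∣ x 3 := by
  rw [PrimTypeII, forall_norm_spPara_le_one_iff]

end Paramodular

section IsotropicSummand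

variable {p : ℕ} [Fact p.Prime] {I J : Submodule ℤ_[p] (Fin 4 → ℤ_[p])}

theorem exists_primTypeI_mem (hIJ : IsCompl I J) (b : Basis (Fin 2) ℤ_[p] I)
    (hiso : ∀ u ∈ I, ∀ v ∈ I, spPara p u v = 0) : ∃ x ∈ I, PrimTypeI p x := by
  set u : Fin 4 → ℤ_[p] := (b 0 : Fin 4 → ℤ_[p])
  set v : Fin 4 → ℤ_[p] := (b 1 : Fin 4 → ℤ_[p])
  by_contra! hnone
  have hcol (k : Fin 2) :
      (p : ℤ_[p]) ∣ (b k : Fin 4 → ℤ_[p]) 0 ∧ (p : ℤ_[p]) ∣ (b k : Fin 4 → ℤ_[p]) 3 :=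
    not_and_not_right.mp ((primTypeI_iff _).not.mp (hnone _ (b k).2))
      (Submodule.not_forall_dvd_basis hIJ b PadicInt.prime_p.not_isUnit k)
  obtain ⟨hu0, hu3⟩ := hcol 0
  obtain ⟨hv0, hv3⟩ := hcol 1
  -- `⟨u, v⟩ = 0` gives `p · plucker 2 1 = plucker 0 3 ≡ 0 mod p²`.
  have h21 : (p : ℤ_[p]) ∣ plucker u v 2 1 := by
    have hpp : (p : ℤ_[p]) * p ∣ p * plucker u v 2 1 := by
      rw [← plucker_eq_of_spPara_eq_zero (hiso u (b 0).2 v (b 1).2)]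
      exact dvd_sub (mul_dvd_mul hu0 hv3) (mul_dvd_mul hu3 hv0)
    exact (mul_dvd_mul_iff_left (PadicInt.prime_p.ne_zero)).mp hpp
  obtain ⟨i, j, hij⟩ := Submodule.exists_not_dvd_plucker hIJ b PadicInt.prime_p.not_isUnit
  apply hij
  fin_cases i <;> fin_cases j <;> simp only [Fin.zero_eta, Fin.mk_one, plucker_self, dvd_zero] <;>
    first
    | exact dvd_plucker_of_dvd hu0 hv0 _
    | exact dvd_plucker_of_dvd hu3 hv3 _
    | exact h21
    | rw [plucker_swap, dvd_neg]
      first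
      | exact dvd_plucker_of_dvd hu0 hv0 _
      | exact dvd_plucker_of_dvd hu3 hv3 _
      | exact h21

theorem exists_primTypeII_mem (hIJ : IsCompl I J) (b : Basis (Fin 2) ℤ_[p] I)
    (hiso : ∀ u ∈ I, ∀ v ∈ I, spPara p u v = 0) : ∃ y ∈ I, PrimTypeII p y := by
  set u : Fin 4 → ℤ_[p] := (b 0 : Fin 4 → ℤ_[p])
  set v : Fin 4 → ℤ_[p] := (b 1 : Fin 4 → ℤ_[p])
  have hu := Submodule.not_forall_dvd_basis hIJ b PadicInt.prime_p.not_isUnit 0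
  by_cases hu03 : (p : ℤ_[p]) ∣ u 0 ∧ (p : ℤ_[p]) ∣ u 3
  · exact ⟨u, (b 0).2, (primTypeII_iff u).mpr ⟨hu, hu03⟩⟩
  obtain ⟨k, hk03, hk⟩ : ∃ k : Fin 4, (k = 0 ∨ k = 3) ∧ ¬ (p : ℤ_[p]) ∣ u k := by
    by_contra! h
    exact hu03 ⟨h 0 (.inl rfl), h 3 (.inr rfl)⟩
  have h03 : (p : ℤ_[p]) ∣ plucker u v 0 3 :=
    ⟨_, plucker_eq_of_spPara_eq_zero (hiso u (b 0).2 v (b 1).2)⟩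
  have hcorner (l : Fin 4) (hl : l = 0 ∨ l = 3) : (p : ℤ_[p]) ∣ plucker u v k l := by
    rcases hk03 with rfl | rfl <;> rcases hl with rfl | rfl <;>
      simp only [plucker_self, dvd_zero, h03, plucker_swap u v 0 3, dvd_neg]
  have hcoord (i : Fin 4) : ((-v k) • u + u k • v) i = plucker u v k i := by
    simp only [plucker, Pi.add_apply, Pi.smul_apply, smul_eq_mul]
    ring
  refine ⟨(-v k) • u + u k • v, I.add_mem (I.smul_mem _ (b 0).2) (I.smul_mem _ (b 1).2), ?_⟩
  refine (primTypeII_iff _).mpr ⟨fun h => hk ?_, ?_, ?_⟩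
  · exact (Submodule.dvd_of_forall_dvd_smul_add_smul hIJ b h).2
  · exact hcoord 0 ▸ hcorner 0 (.inl rfl)
  · exact hcoord 3 ▸ hcorner 3 (.inr rfl)

theorem not_dvd_det_of_primTypeI_of_primTypeII (b : Basis (Fin 2) ℤ_[p] I) {x y : I}
    (hx : PrimTypeI p x) (hy : PrimTypeII p y) : ¬ (p : ℤ_[p]) ∣ b.det ![x, y] := by
  intro hdet
  obtain ⟨hxprim, hx03⟩ := (primTypeI_iff _).mp hx
  obtain ⟨hyprim, hy0, hy3⟩ := (primTypeII_iff _).mp hy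
  obtain ⟨k, hk⟩ : ∃ k, ¬ (p : ℤ_[p]) ∣ b.repr y k := by
    by_contra! h
    apply hyprim
    intro i
    rw [← b.sum_repr y, Submodule.coe_sum, Finset.sum_apply]
    exact Finset.dvd_sum fun k _ => by simpa using (h k).mul_right _
  obtain ⟨z, hz⟩ := b.exists_smul_sub_smul_eq_det_smul x y k
  -- `b.repr y k • x ≡ b.repr x k • y (mod p)` with `b.repr y k` prime to `p`, so `x` inherits
  -- the type (II) congruences of `y`.
  have hxi (i : Fin 4) (hyi : (p : ℤ_[p]) ∣ (y : Fin 4 → ℤ_[p]) i) :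
      (p : ℤ_[p]) ∣ (x : Fin 4 → ℤ_[p]) i := by
    have hi := congrArg (fun w : I => (w : Fin 4 → ℤ_[p]) i) hz
    simp only [Submodule.coe_sub, Submodule.coe_smul, Pi.sub_apply, Pi.smul_apply,
      smul_eq_mul] at hi
    have : (p : ℤ_[p]) ∣ b.repr y k * (x : Fin 4 → ℤ_[p]) i := by
      rw [sub_eq_iff_eq_add.mp hi]
      exact dvd_add (hdet.mul_right _) (hyi.mul_left _)
    exact (PadicInt.prime_p.dvd_mul.mp this).resolve_left hk
  exact hx03 ⟨hxi 0 hy0, hxi 3 hy3⟩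

theorem exists_basis_eq_of_primTypeI_of_primTypeII (b : Basis (Fin 2) ℤ_[p] I) {x y : I}
    (hx : PrimTypeI p x) (hy : PrimTypeII p y) :
    ∃ B : Basis (Fin 2) ℤ_[p] I, B 0 = x ∧ B 1 = y := by
  obtain ⟨hli, hspan⟩ := (b.is_basis_iff_det).mpr
    (PadicInt.isUnit_of_not_dvd (not_dvd_det_of_primTypeI_of_primTypeII b hx hy))
  exact ⟨Basis.mk hli hspan.ge, by simp, by simp⟩

end IsotropicSummand

theorem isotropic_summand_basis_typeI_typeII
    (p : ℕ) [Fact p.Prime]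
    (I : Submodule ℤ_[p] (Fin 4 → ℤ_[p]))
    (hiso : ∀ u ∈ I, ∀ v ∈ I, spPara p u v = 0)
    (hsummand : ∃ J : Submodule ℤ_[p] (Fin 4 → ℤ_[p]), IsCompl I J)
    (brank : Module.Basis (Fin 2) ℤ_[p] I) :
    (∃ x ∈ I, PrimTypeI p x) ∧ (∃ y ∈ I, PrimTypeII p y) ∧
    (∀ x y : Fin 4 → ℤ_[p], x ∈ I → y ∈ I → PrimTypeI p x → PrimTypeII p y →
      ∃ B : Module.Basis (Fin 2) ℤ_[p] I,
        (B 0 : Fin 4 → ℤ_[p]) = x ∧ (B 1 : Fin 4 → ℤ_[p]) = y) := by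
  obtain ⟨J, hIJ⟩ := hsummand
  refine ⟨exists_primTypeI_mem hIJ brank hiso, exists_primTypeII_mem hIJ brank hiso, ?_⟩
  intro x y hx hy hxI hyII
  obtain ⟨B, hB0, hB1⟩ :=
    exists_basis_eq_of_primTypeI_of_primTypeII brank (x := ⟨x, hx⟩) (y := ⟨y, hy⟩) hxI hyII
  exact ⟨B, by rw [hB0], by rw [hB1]⟩
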